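/- Must-testing compliance is contained in should-testing compliance, which is contained in progress: ⊣mst ⊆ ⊣shd ⊆ ⊣pg. -/
import Mathlib


/-- A labelled transition system of contracts: states `U`, visible actions `Act`
partitioned into outputs (`isOut`) and inputs, with a dual involution swapping
inputs and outputs; transitions carry `Option Act` labels (`none` is the
internal action τ); `zero` is the unique state with no outgoing transitions. -/
structure CLTS where
  U : Type
  Act : Type
  isOut : Act → Prop
  dual : Act → Act
  dual_dual : ∀ a, dual (dual a) = a
  dual_flip : ∀ a, isOut (dual a) ↔ ¬ isOut a
  tr : U → Option Act → U → Prop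
  zero : U
  zero_no_trans : ∀ l p', ¬ tr zero l p'
  no_trans_eq_zero : ∀ p, (∀ l p', ¬ tr p l p') → p = zero

namespace CLTS

variable (M : CLTS)

/-- One-step τ-reduction of a client/server pair (τ-transition of `p | q`). -/
def Step (c c' : M.U × M.U) : Prop :=
  (M.tr c.1 none c'.1 ∧ c'.2 = c.2) ∨
  (c'.1 = c.1 ∧ M.tr c.2 none c'.2) ∨
  (∃ a, M.tr c.1 (some a) c'.1 ∧ M.tr c.2 (some (M.dual a)) c'.2)

/-- A pair is stuck if it has no one-step τ-reduction. -/
def Stuck (c : M.U × M.U) : Prop := ∀ c', ¬ M.Step c c'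

/-- Reflexive-transitive closure of one-step τ-reduction. -/
def Steps : M.U × M.U → M.U × M.U → Prop := Relation.ReflTransGen M.Step

/-- Successful pairs: the client has terminated. -/
def Succ : Set (M.U × M.U) := {c | c.1 = M.zero}

/-- The compliance functional. -/
def F (x : Set (M.U × M.U)) : Set (M.U × M.U) :=
  M.Succ ∪ {c | ¬ M.Stuck c ∧ ∀ c', M.Step c c' → c' ∈ x}

/-- Progress compliance. -/
def Pg (p q : M.U) : Prop :=
  ∀ p' q', M.Steps (p, q) (p', q') → M.Stuck (p', q') → p' = M.zero

/-- Progress compliance, as a set of pairs. -/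
def pgRel : Set (M.U × M.U) := {c | M.Pg c.1 c.2}

/-- Must-testing compliance: every maximal τ-trace (encoded as a sequence which,
once stuck, stays put) reaches a successful pair. -/
def Mst (p q : M.U) : Prop :=
  ∀ s : ℕ → M.U × M.U, s 0 = (p, q) →
    (∀ n, M.Step (s n) (s (n + 1)) ∨ (M.Stuck (s n) ∧ s (n + 1) = s n)) →
    ∃ i, (s i).1 = M.zero

/-- Must-testing compliance, as a set of pairs. -/
def mstRel : Set (M.U × M.U) := {c | M.Mst c.1 c.2}

/-- Should-testing compliance. -/
def Shd (p q : M.U) : Prop :=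
  ∀ p' q', M.Steps (p, q) (p', q') → ∃ q'', M.Steps (p', q') (M.zero, q'')

/-- Should-testing compliance, as a set of pairs. -/
def shdRel : Set (M.U × M.U) := {c | M.Shd c.1 c.2}

/-- τ-transition on single states. -/
def TauStep (r r' : M.U) : Prop := M.tr r none r'

/-- Reflexive-transitive closure of τ-transitions on single states. -/
def TauSteps : M.U → M.U → Prop := Relation.ReflTransGen M.TauStep

/-- `r` may diverge: it has an infinite internal computation. -/
def Diverges (r : M.U) : Prop :=
  ∃ s : ℕ → M.U, s 0 = r ∧ ∀ n, M.TauStep (s n) (s (n + 1))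

/-- Behavioural compliance. -/
def Beh (p q : M.U) : Prop :=
  ∀ p' q', M.Steps (p, q) (p', q') →
    (M.Stuck (p', q') → p' = M.zero) ∧ (M.Diverges q' → M.TauSteps p' M.zero)

/-- Behavioural compliance, as a set of pairs. -/
def behRel : Set (M.U × M.U) := {c | M.Beh c.1 c.2}

/-- Weak barb on a visible action. -/
def WBarb (p : M.U) (a : M.Act) : Prop :=
  ∃ p₁ p₂, M.TauSteps p p₁ ∧ M.tr p₁ (some a) p₂

/-- I/O compliance. -/
def Io (p q : M.U) : Prop :=
  ∀ p' q', M.Steps (p, q) (p', q') →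
    (∀ a, M.isOut a → M.WBarb p' a → M.WBarb q' (M.dual a)) ∧
    (((¬ ∃ a, M.isOut a ∧ M.WBarb p' a) ∧ (∃ a, ¬ M.isOut a ∧ M.WBarb p' a)) →
      ((∃ a, M.isOut a ∧ M.WBarb q' a) ∧
       ∀ a, M.isOut a → M.WBarb q' a → M.WBarb p' (M.dual a)))

/-- I/O compliance, as a set of pairs. -/
def ioRel : Set (M.U × M.U) := {c | M.Io c.1 c.2}

/-- May-testing compliance. -/
def May (p q : M.U) : Prop := ∃ q', M.Steps (p, q) (M.zero, q')

/-- May-testing compliance, as a set of pairs. -/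
def mayRel : Set (M.U × M.U) := {c | M.May c.1 c.2}

end CLTS


open Classical in
private lemma clts_step_zero (M : CLTS) {c c' : M.U × M.U} (h0 : c.1 = M.zero)
    (h : M.Step c c') : c'.1 = M.zero := by
  rcases h with ⟨h, _⟩ | ⟨h, _⟩ | ⟨a, h, _⟩
  · exact absurd h (h0 ▸ M.zero_no_trans _ _)
  · simpa [h0] using h
  · exact absurd h (h0 ▸ M.zero_no_trans _ _)

private lemma clts_mst_step (M : CLTS) {c c' : M.U × M.U} (h : M.Mst c.1 c.2)
    (hs : M.Step c c') : M.Mst c'.1 c'.2 := by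
  intro s hs0 hstep
  have hs0' : s 0 = c' := by simpa using hs0
  set t : ℕ → M.U × M.U := fun n => match n with | 0 => c | n+1 => s n with ht
  have := h t (by simp [ht]) ?_
  · rcases this with ⟨i, hi⟩
    match i with
    | 0 =>
      refine ⟨0, ?_⟩
      rw [hs0']
      exact clts_step_zero M hi hs
    | i+1 => exact ⟨i, hi⟩
  · intro n
    match n with
    | 0 => left; simpa [ht, hs0'] using hs
    | n+1 => exact hstep n

private lemma clts_mst_steps (M : CLTS) {c c' : M.U × M.U} (h : M.Mst c.1 c.2)
    (hs : M.Steps c c') : M.Mst c'.1 c'.2 := by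
  induction hs with
  | refl => exact h
  | tail _ hstep ih => exact clts_mst_step M ih hstep

/-- must ⊆ should ⊆ progress. -/
theorem mst_subset_shd_subset_pg (M : CLTS) :
    M.mstRel ⊆ M.shdRel ∧ M.shdRel ⊆ M.pgRel := by
  constructor
  · -- mst ⊆ shd
    rintro ⟨p, q⟩ hm p' q' hst
    have hm' : M.Mst p' q' := clts_mst_steps M hm hst
    by_contra hno
    push_neg at hno
    -- Bad set: cannot reach a successful pair
    set Bad : M.U × M.U → Prop := fun c => ¬ ∃ q'', M.Steps c (M.zero, q'') with hBad
    have hb0 : Bad (p', q') := by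
      intro ⟨q'', h⟩; exact hno q'' h
    have hpres : ∀ c c', Bad c → M.Step c c' → Bad c' := by
      intro c c' hc hs ⟨q'', h⟩
      exact hc ⟨q'', Relation.ReflTransGen.head hs h⟩
    classical
    let g : {c // Bad c} → {c // Bad c} := fun ⟨c, hc⟩ =>
      if h : ∃ c', M.Step c c' then ⟨h.choose, hpres c _ hc h.choose_spec⟩ else ⟨c, hc⟩
    let t : ℕ → {c // Bad c} := fun n => g^[n] ⟨(p', q'), hb0⟩
    have ht : ∀ n, t (n+1) = g (t n) := fun n => Function.iterate_succ_apply' g n _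
    have hseq : ∀ n, M.Step ((t n).1) ((t (n+1)).1) ∨
        (M.Stuck ((t n).1) ∧ (t (n+1)).1 = (t n).1) := by
      intro n
      rw [ht n]
      obtain ⟨c, hc⟩ := t n
      by_cases h : ∃ c', M.Step c c'
      · left; simp only [g, dif_pos h]; exact h.choose_spec
      · right
        refine ⟨fun c' hs => h ⟨c', hs⟩, ?_⟩
        simp only [g, dif_neg h]
    obtain ⟨i, hi⟩ := hm' (fun n => (t n).1) (by simp [t]) hseq
    have hbi : Bad ((t i).1) := (t i).2
    exact hbi ⟨(t i).1.2, by rw [show (t i).1 = (M.zero, (t i).1.2) from Prod.ext hi rfl]; exact Relation.ReflTransGen.refl⟩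
  · -- shd ⊆ pg
    rintro ⟨p, q⟩ hsh p' q' hst hstuck
    obtain ⟨q'', hq⟩ := hsh p' q' hst
    rcases Relation.reflTransGen_iff_eq_or_transGen.1 hq with heq | htg
    · exact congrArg Prod.fst heq.symm
    · obtain ⟨c, hs, _⟩ := Relation.TransGen.head'_iff.1 htg
      exact absurd hs (hstuck c)
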